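/- Generalized disjunctive paraconsistent relations generalize disjunctive paraconsistent relations: for every normalized disjunctive paraconsistent relation S on a scheme Σ with S⁻ finite and nonempty, the generalized disjunctive paraconsistent relation R = ⟨S⁺, {{t} : t ∈ S⁻}⟩ (whose negative component consists of the singletons of the tuples of S⁻) is normalized and has the same information content as S, namely g_rep(R) = {S}. -/

import Mathlib

/-!
Formalization of generalized disjunctive paraconsistent relations.

A scheme is a finite set of attribute names `σ : Finset Attr`; each attribute
`a` has a (nonempty) domain `Val a`.  A tuple on `σ` assigns to each `a ∈ σ`
a value in `Val a`.
-/

variable {Attr : Type*}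

/-- A tuple on scheme `σ`: a map assigning to each attribute `a ∈ σ` a value in `dom a`. -/
def Tuple (Val : Attr → Type*) (σ : Finset Attr) : Type _ :=
  (a : Attr) → a ∈ σ → Val a

variable {Val : Attr → Type*}

/-- Restriction (projection) of a tuple on `σ` to a subscheme `Δ ⊆ σ`. -/
def restrict {Δ σ : Finset Attr} (h : Δ ⊆ σ) (t : Tuple Val σ) : Tuple Val Δ :=
  fun a ha => t a (h ha)

/-- A set is a singleton (has exactly one element), i.e. `|s| = 1`. -/
def IsSingletonSet {α : Type*} (s : Set α) : Prop := ∃ t, s = {t}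

/-- For a collection `U = {u₁, …, u_m}` of sets, the collection of all
"choice sets" `{t₁, …, t_m}` with `tᵢ ∈ uᵢ` for each `i`. -/
def transversals {α : Type*} (U : Set (Set α)) : Set (Set α) :=
  {s | ∃ f : Set α → α, (∀ u ∈ U, f u ∈ u) ∧ s = (fun u => f u) '' U}

/-- A disjunctive paraconsistent relation on scheme `σ`: a pair `⟨S⁺, S⁻⟩` where
`S⁺` is a set of tuple sets and `S⁻` a set of tuples. -/
structure DPR (Val : Attr → Type*) (σ : Finset Attr) where
  pos : Set (Set (Tuple Val σ))
  neg : Set (Tuple Val σ)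

/-- Well-formedness of a disjunctive paraconsistent relation: the positive
component is a finite set of nonempty finite tuple sets. -/
def DPR.WellFormed {σ : Finset Attr} (S : DPR Val σ) : Prop :=
  S.pos.Finite ∧ ∀ w ∈ S.pos, w.Finite ∧ w.Nonempty

/-- A disjunctive paraconsistent relation is normalized if no `w ∈ S⁺` satisfies `w ⊆ S⁻`. -/
def DPR.Normalized {σ : Finset Attr} (S : DPR Val σ) : Prop :=
  ∀ w ∈ S.pos, ¬ w ⊆ S.neg

/-- A generalized disjunctive paraconsistent relation on scheme `σ`: a pair
`⟨R⁺, R⁻⟩` of sets of tuple sets. -/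
structure GDPR (Val : Attr → Type*) (σ : Finset Attr) where
  pos : Set (Set (Tuple Val σ))
  neg : Set (Set (Tuple Val σ))

/-- Well-formedness: both components are finite sets of nonempty finite tuple sets. -/
def GDPR.WellFormed {σ : Finset Attr} (R : GDPR Val σ) : Prop :=
  R.pos.Finite ∧ R.neg.Finite ∧ (∀ w ∈ R.pos, w.Finite ∧ w.Nonempty) ∧
    ∀ u ∈ R.neg, u.Finite ∧ u.Nonempty

/-- `W(R)` : the union of all singleton tuple sets of the positive component. -/
def GDPR.W {σ : Finset Attr} (R : GDPR Val σ) : Set (Tuple Val σ) :=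
  ⋃₀ {w ∈ R.pos | IsSingletonSet w}

/-- `U(R)` : the union of all singleton tuple sets of the negative component. -/
def GDPR.U {σ : Finset Attr} (R : GDPR Val σ) : Set (Tuple Val σ) :=
  ⋃₀ {u ∈ R.neg | IsSingletonSet u}

/-- The normalization operator `g_norm`, removing inconsistencies. -/
def gnorm {σ : Finset Attr} (R : GDPR Val σ) : GDPR Val σ where
  pos := (R.pos \ {w ∈ R.pos | w ⊆ R.U}) \
    {w ∈ R.pos | IsSingletonSet w ∧ ∃ u ∈ R.neg, u ⊆ R.W ∧ w ⊆ u}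
  neg := (R.neg \ {u ∈ R.neg | u ⊆ R.W}) \
    {u ∈ R.neg | IsSingletonSet u ∧ ∃ w ∈ R.pos, w ⊆ R.U ∧ u ⊆ w}

/-- `R` is normalized if it contains no inconsistencies, i.e. `g_norm(R) = R`. -/
def GDPR.Normalized {σ : Finset Attr} (R : GDPR Val σ) : Prop := gnorm R = R

/-- The redundancy-removal operator `g_reduce`. -/
def greduce {σ : Finset Attr} (R : GDPR Val σ) : GDPR Val σ where
  pos := {w' | ∃ w ∈ R.pos, w' = w \ R.U ∧ ¬ ∃ w₁ ∈ R.pos, (w₁ \ R.U) ⊂ w'}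
  neg := {u' | ∃ u ∈ R.neg, u' = u \ R.W ∧ ¬ ∃ u₁ ∈ R.neg, (u₁ \ R.W) ⊂ u'}

/-- The redundancy-removal operator `reduce` on disjunctive paraconsistent relations. -/
def reduce {σ : Finset Attr} (S : DPR Val σ) : DPR Val σ where
  pos := {w' | ∃ w ∈ S.pos, w' = w \ S.neg ∧ ¬ ∃ w₁ ∈ S.pos, (w₁ \ S.neg) ⊂ w'}
  neg := S.neg

/-- `g_normrep` removes all inconsistent disjunctive paraconsistent relations. -/
def gnormrep {σ : Finset Attr} (U : Set (DPR Val σ)) : Set (DPR Val σ) :=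
  U \ {S ∈ U | ∃ w ∈ S.pos, w ⊆ S.neg}

/-- `g_reducerep` keeps only the minimal disjunctive paraconsistent relations. -/
def greducerep {σ : Finset Attr} (U : Set (DPR Val σ)) : Set (DPR Val σ) :=
  {S ∈ U | ¬ ∃ S' ∈ U, S' ≠ S ∧ S'.pos ⊆ S.pos ∧ S'.neg ⊆ S.neg}

/-- The information content `g_rep` of a (normalized) generalized disjunctive
paraconsistent relation: all disjunctive paraconsistent relations obtained by
choosing one tuple from each negative tuple set, after removing inconsistent
and non-minimal ones. -/
def grep {σ : Finset Attr} (R : GDPR Val σ) : Set (DPR Val σ) :=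
  greducerep (gnormrep
    {S : DPR Val σ | S.pos = R.pos ∧ S.neg ∈ transversals R.neg})

/-- Union `∪̂` on disjunctive paraconsistent relations. -/
def dUnion {σ : Finset Attr} (R S : DPR Val σ) : DPR Val σ :=
  reduce ⟨(reduce R).pos ∪ (reduce S).pos, (reduce R).neg ∩ (reduce S).neg⟩

/-- Intersection `∩̂` on disjunctive paraconsistent relations. -/
def dInter {σ : Finset Attr} (R S : DPR Val σ) : DPR Val σ :=
  reduce ⟨transversals {a | ∃ E ∈ transversals (reduce R).pos,
      ∃ F ∈ transversals (reduce S).pos, a = E ∩ F},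
    R.neg ∪ S.neg⟩

/-- Selection `σ̂_F` on disjunctive paraconsistent relations, where the
selection formula `F` is modelled as a predicate on tuples. -/
def dSelect {σ : Finset Attr} (F : Tuple Val σ → Prop) (S : DPR Val σ) : DPR Val σ :=
  reduce ⟨{w ∈ (reduce S).pos | ∀ t ∈ w, F t}, (reduce S).neg ∪ {t | ¬ F t}⟩

/-- `t^σ` : the set of all extensions to scheme `σ` of a tuple `t` on `Δ ⊆ σ`. -/
def tupleExt {Δ σ : Finset Attr} (h : Δ ⊆ σ) (t : Tuple Val Δ) : Set (Tuple Val σ) :=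
  {t' | restrict h t' = t}

/-- `T^σ` : the set of all extensions to scheme `σ` of tuples of `T ⊆ τ(Δ)`. -/
def setExt {Δ σ : Finset Attr} (h : Δ ⊆ σ) (T : Set (Tuple Val Δ)) : Set (Tuple Val σ) :=
  {t' | restrict h t' ∈ T}

/-- Projection `π̂_Δ` on disjunctive paraconsistent relations. -/
def dProj {Δ σ : Finset Attr} (h : Δ ⊆ σ) (S : DPR Val σ) : DPR Val Δ :=
  reduce ⟨{w' | ∃ w ∈ (reduce S).pos, w' = restrict h '' w},
    {t | tupleExt h t ⊆ (reduce S).neg}⟩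

/-- Natural join `V ⋈ W` of tuple sets on schemes `σ₁` and `σ₂`. -/
def tjoin [DecidableEq Attr] {σ₁ σ₂ : Finset Attr}
    (V : Set (Tuple Val σ₁)) (W : Set (Tuple Val σ₂)) :
    Set (Tuple Val (σ₁ ∪ σ₂)) :=
  {t | restrict Finset.subset_union_left t ∈ V ∧
       restrict Finset.subset_union_right t ∈ W}

/-- Natural join `⋈̂` on disjunctive paraconsistent relations. -/
def dJoin [DecidableEq Attr] {σ₁ σ₂ : Finset Attr}
    (R : DPR Val σ₁) (S : DPR Val σ₂) : DPR Val (σ₁ ∪ σ₂) :=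
  reduce ⟨transversals {a | ∃ E ∈ transversals (reduce R).pos,
      ∃ F ∈ transversals (reduce S).pos, a = tjoin E F},
    setExt Finset.subset_union_left (reduce R).neg ∪
      setExt Finset.subset_union_right (reduce S).neg⟩

/-- Union `∪̄` on generalized disjunctive paraconsistent relations. -/
def gUnion {σ : Finset Attr} (R S : GDPR Val σ) : GDPR Val σ :=
  greduce ⟨(greduce R).pos ∪ (greduce S).pos,
    transversals {a | ∃ E ∈ transversals (greduce R).neg,
      ∃ F ∈ transversals (greduce S).neg, a = E ∩ F}⟩

/-- Intersection `∩̄` on generalized disjunctive paraconsistent relations. -/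
def gInter {σ : Finset Attr} (R S : GDPR Val σ) : GDPR Val σ :=
  greduce ⟨transversals {a | ∃ E ∈ transversals (greduce R).pos,
      ∃ F ∈ transversals (greduce S).pos, a = E ∩ F},
    (greduce R).neg ∪ (greduce S).neg⟩

/-- Selection `σ̄_F` on generalized disjunctive paraconsistent relations. -/
def gSelect {σ : Finset Attr} (F : Tuple Val σ → Prop) (R : GDPR Val σ) : GDPR Val σ :=
  greduce ⟨{w ∈ (greduce R).pos | ∀ t ∈ w, F t},
    R.neg ∪ {u | ∃ t, ¬ F t ∧ u = {t}}⟩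

/-- Projection `π̄_Δ` on generalized disjunctive paraconsistent relations. -/
def gProj {Δ σ : Finset Attr} (h : Δ ⊆ σ) (R : GDPR Val σ) : GDPR Val Δ :=
  greduce ⟨{w' | ∃ w ∈ (greduce R).pos, w' = restrict h '' w},
    transversals {a | (∃ E ∈ transversals (greduce R).neg,
        a = {t | tupleExt h t ⊆ E}) ∧ a.Nonempty}⟩

/-- Natural join `⋈̄` on generalized disjunctive paraconsistent relations. -/
def gJoin [DecidableEq Attr] {σ₁ σ₂ : Finset Attr}
    (R : GDPR Val σ₁) (S : GDPR Val σ₂) : GDPR Val (σ₁ ∪ σ₂) :=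
  greduce ⟨transversals {a | ∃ E ∈ transversals (greduce R).pos,
      ∃ F ∈ transversals (greduce S).pos, a = tjoin E F},
    transversals {b | ∃ G ∈ transversals (greduce R).neg,
      ∃ H ∈ transversals (greduce S).neg,
      b = setExt Finset.subset_union_left G ∪
          setExt Finset.subset_union_right H}⟩

/-!
The negative component of `⟨S⁺, {{t} : t ∈ S⁻}⟩` consists of singletons, so the only way to
choose one tuple from each of its members gives back `S⁻` itself, and `g_rep` can contain
nothing but `S`. Normalization reduces to that of `S`: `U(R) = S⁻`, and a negative singleton
`{t}` inside `W(R)` would make `{t}` a positive tuple set contained in `S⁻`.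
-/

theorem image_setOf_singletons_eq {α : Type*} {s : Set α} {f : Set α → α}
    (hf : ∀ t ∈ s, f {t} = t) : f '' {u | ∃ t ∈ s, u = {t}} = s := by
  ext t
  constructor
  · rintro ⟨_, ⟨t', ht', rfl⟩, rfl⟩
    rw [hf t' ht']
    exact ht'
  · intro ht
    exact ⟨{t}, ⟨t, ht, rfl⟩, hf t ht⟩

theorem transversals_setOf_singletons {α : Type*} [Nonempty α] (s : Set α) :
    transversals {u | ∃ t ∈ s, u = {t}} = {s} := by
  ext r
  constructor
  · rintro ⟨f, hf, rfl⟩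
    exact image_setOf_singletons_eq fun t ht => hf {t} ⟨t, ht, rfl⟩
  · rintro rfl
    refine ⟨fun u => Classical.epsilon (· ∈ u), ?_, ?_⟩
    · rintro _ ⟨t, -, rfl⟩
      exact Classical.epsilon_spec (p := (· ∈ ({t} : Set α))) ⟨t, rfl⟩
    · exact (image_setOf_singletons_eq fun t _ => Classical.epsilon_singleton t).symm

variable {σ : Finset Attr}

theorem gnormrep_singleton {S : DPR Val σ} (hn : S.Normalized) : gnormrep {S} = {S} := by
  refine sdiff_eq_left.2 (Set.disjoint_left.2 ?_)
  rintro _ rfl ⟨-, w, hw, hws⟩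
  exact hn w hw hws

theorem greducerep_singleton (S : DPR Val σ) : greducerep {S} = {S} :=
  Set.sep_eq_self_iff_mem_true.2 fun _ hS ⟨_, hS', hne, _⟩ => hne (hS'.trans hS.symm)

theorem grep_eq_singleton_of_transversals_eq {R : GDPR Val σ} {s : Set (Tuple Val σ)}
    (htr : transversals R.neg = {s}) (hn : DPR.Normalized ⟨R.pos, s⟩) :
    grep R = {⟨R.pos, s⟩} := by
  have hcand : {S : DPR Val σ | S.pos = R.pos ∧ S.neg ∈ transversals R.neg} = {⟨R.pos, s⟩} := by
    ext ⟨p, n⟩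
    simp only [htr, Set.mem_ofPred_eq, Set.mem_singleton_iff, DPR.mk.injEq]
  rw [grep, hcand, gnormrep_singleton hn, greducerep_singleton]

namespace GDPR

theorem mem_W_iff {R : GDPR Val σ} {t : Tuple Val σ} : t ∈ R.W ↔ {t} ∈ R.pos := by
  constructor
  · rintro ⟨_, ⟨hw, t', rfl⟩, ht⟩
    rwa [Set.mem_singleton_iff.1 ht]
  · intro h
    exact ⟨{t}, ⟨h, t, rfl⟩, rfl⟩

theorem normalized_of_forall_not_subset {R : GDPR Val σ} (hpos : ∀ w ∈ R.pos, ¬ w ⊆ R.U)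
    (hneg : ∀ u ∈ R.neg, ¬ u ⊆ R.W) : R.Normalized := by
  have e₁ : {w ∈ R.pos | w ⊆ R.U} = ∅ :=
    Set.eq_empty_of_forall_notMem fun w ⟨hw, h⟩ => hpos w hw h
  have e₂ : {w ∈ R.pos | IsSingletonSet w ∧ ∃ u ∈ R.neg, u ⊆ R.W ∧ w ⊆ u} = ∅ :=
    Set.eq_empty_of_forall_notMem fun _ ⟨_, _, u, hu, h, _⟩ => hneg u hu h
  have e₃ : {u ∈ R.neg | u ⊆ R.W} = ∅ :=
    Set.eq_empty_of_forall_notMem fun u ⟨hu, h⟩ => hneg u hu h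
  have e₄ : {u ∈ R.neg | IsSingletonSet u ∧ ∃ w ∈ R.pos, w ⊆ R.U ∧ u ⊆ w} = ∅ :=
    Set.eq_empty_of_forall_notMem fun _ ⟨_, _, w, hw, h, _⟩ => hpos w hw h
  rw [Normalized, gnorm, e₁, e₂, e₃, e₄]
  simp only [Set.sdiff_empty]

def ofDPR (S : DPR Val σ) : GDPR Val σ := ⟨S.pos, {u | ∃ t ∈ S.neg, u = {t}}⟩

theorem U_ofDPR (S : DPR Val σ) : (ofDPR S).U = S.neg := by
  ext t
  constructor
  · rintro ⟨_, ⟨⟨t', ht', rfl⟩, -⟩, ht⟩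
    rwa [Set.mem_singleton_iff.1 ht]
  · intro ht
    exact ⟨{t}, ⟨⟨t, ht, rfl⟩, t, rfl⟩, rfl⟩

theorem ofDPR_wellFormed {S : DPR Val σ} (hwf : S.WellFormed) (hfin : S.neg.Finite) :
    (ofDPR S).WellFormed := by
  refine ⟨hwf.1, ?_, hwf.2, ?_⟩
  · refine (hfin.image fun t => ({t} : Set (Tuple Val σ))).subset ?_
    rintro _ ⟨t, ht, rfl⟩
    exact ⟨t, ht, rfl⟩
  · rintro _ ⟨t, -, rfl⟩
    exact ⟨Set.finite_singleton t, Set.singleton_nonempty t⟩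

theorem ofDPR_normalized {S : DPR Val σ} (hn : S.Normalized) : (ofDPR S).Normalized := by
  refine normalized_of_forall_not_subset (fun w hw hwU => hn w hw (U_ofDPR S ▸ hwU)) ?_
  rintro _ ⟨t, ht, rfl⟩ htW
  exact hn {t} (mem_W_iff.1 (htW rfl)) (Set.singleton_subset_iff.2 ht)

theorem grep_ofDPR {S : DPR Val σ} (hn : S.Normalized) (hne : S.neg.Nonempty) :
    grep (ofDPR S) = {S} :=
  have := hne.to_type
  grep_eq_singleton_of_transversals_eq (transversals_setOf_singletons S.neg) hn

end GDPR

theorem gdpr_generalizes_dpr_general {σ : Finset Attr}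
    (S : DPR Val σ) (hwf : S.WellFormed) (hn : S.Normalized)
    (hfin : S.neg.Finite) (hne : S.neg.Nonempty) :
    (GDPR.mk S.pos {u | ∃ t ∈ S.neg, u = {t}} : GDPR Val σ).WellFormed ∧
    (GDPR.mk S.pos {u | ∃ t ∈ S.neg, u = {t}} : GDPR Val σ).Normalized ∧
    grep (GDPR.mk S.pos {u | ∃ t ∈ S.neg, u = {t}} : GDPR Val σ) = {S} :=
  ⟨GDPR.ofDPR_wellFormed hwf hfin, GDPR.ofDPR_normalized hn, GDPR.grep_ofDPR hn hne⟩

/-- generalized disjunctive paraconsistent relations generalize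
disjunctive paraconsistent relations: for every normalized disjunctive
paraconsistent relation `S` with finite nonempty negative component, the
generalized relation `⟨S⁺, {{t} : t ∈ S⁻}⟩` is normalized and has information
content exactly `{S}`. -/
theorem gdpr_generalizes_dpr {σ : Finset Attr} [∀ a, Nonempty (Val a)]
    (S : DPR Val σ) (hwf : S.WellFormed) (hn : S.Normalized)
    (hfin : S.neg.Finite) (hne : S.neg.Nonempty) :
    (GDPR.mk S.pos {u | ∃ t ∈ S.neg, u = {t}} : GDPR Val σ).WellFormed ∧
    (GDPR.mk S.pos {u | ∃ t ∈ S.neg, u = {t}} : GDPR Val σ).Normalized ∧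
    grep (GDPR.mk S.pos {u | ∃ t ∈ S.neg, u = {t}} : GDPR Val σ) = {S} :=
  gdpr_generalizes_dpr_general S hwf hn hfin hne
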